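/- Let K = k[[ℏ]] with k a field of characteristic 0, and let (A, B, i, p) be a split pair of Hopf algebras over K with invertible antipode such that the image of Δ − (1 2)∘Δ is contained in ℏ·(B ⊗ B). Let L = Π(B) with coaction π_L*(x) = Σ x₍₃₎ · S⁻¹(x₍₁₎) ⊗ x₍₂₎ for x ∈ L. Then for every x ∈ L, ((id − ι∘ε) ⊗ id)(π_L*(x)) ∈ ℏ·(B ⊗ B); hence (by the admissibility criterion) the coaction on L factors through B′ ⊗ L, i.e. L is an admissible Drinfeld–Yetter B-module. -/

import Mathlib

open TensorProduct

noncomputable section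

section PowersInfra

/-- A bundled module over `K`, used to form iterated tensor powers of `B`. -/
structure ModuleBundle (K : Type) [CommRing K] : Type 1 where
  carrier : Type
  [acg : AddCommGroup carrier]
  [mod : Module K carrier]

attribute [instance] ModuleBundle.acg ModuleBundle.mod

variable (K : Type) [CommRing K] (B : Type) [Ring B] [HopfAlgebra K B]

/-- The iterated (right-nested) tensor power `Tn K B n ≅ B^{⊗(n+1)}`. -/
def Tn : ℕ → ModuleBundle K
  | 0 => ⟨B⟩
  | n + 1 => ⟨B ⊗[K] (Tn n).carrier⟩

/-- The iterated comultiplication `Δ⁽ⁿ⁺¹⁾ : B → B^{⊗(n+1)}`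
(`Δ⁽¹⁾ = id`, `Δ⁽ⁿ⁺²⁾ = (id ⊗ Δ⁽ⁿ⁺¹⁾) ∘ Δ`). -/
def DeltaIter : (n : ℕ) → B →ₗ[K] (Tn K B n).carrier
  | 0 => LinearMap.id
  | n + 1 => LinearMap.lTensor B (DeltaIter n) ∘ₗ (Coalgebra.comul : B →ₗ[K] B ⊗[K] B)

/-- `id − ι ∘ ε : B → B`. -/
def pProj : B →ₗ[K] B :=
  LinearMap.id - Algebra.linearMap K B ∘ₗ (Coalgebra.counit : B →ₗ[K] K)

/-- `(id − ι∘ε)^{⊗(n+1)}` on `B^{⊗(n+1)}`. -/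
def pProjIter : (n : ℕ) → (Tn K B n).carrier →ₗ[K] (Tn K B n).carrier
  | 0 => pProj K B
  | n + 1 => TensorProduct.map (pProj K B) (pProjIter n)

/-- `d⁽ⁿ⁺¹⁾ = (id − ι∘ε)^{⊗(n+1)} ∘ Δ⁽ⁿ⁺¹⁾ : B → B^{⊗(n+1)}`. -/
def dIter (n : ℕ) : B →ₗ[K] (Tn K B n).carrier := pProjIter K B n ∘ₗ DeltaIter K B n

end PowersInfra

section SplitPair

variable {K : Type} [CommRing K]
variable {A : Type} [Ring A] [HopfAlgebra K A]
variable {B : Type} [Ring B] [HopfAlgebra K B]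

/-- `π = i ∘ p : B → B`, for a split pair of Hopf algebras `(A, B, i, p)`. -/
def piMap (i : A →ₐc[K] B) (p : B →ₐc[K] A) : B →ₗ[K] B :=
  i.toLinearMap ∘ₗ p.toLinearMap

/-- `Π = m ∘ (id ⊗ (S ∘ π)) ∘ Δ : B → B`, i.e. `Π(b) = Σ b₍₁₎ · S(π(b₍₂₎))`. -/
def PiMap (i : A →ₐc[K] B) (p : B →ₐc[K] A) : B →ₗ[K] B :=
  LinearMap.mul' K B ∘ₗ
    TensorProduct.map LinearMap.id (HopfAlgebra.antipode K ∘ₗ piMap i p) ∘ₗ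
    (Coalgebra.comul : B →ₗ[K] B ⊗[K] B)

/-- The twice-iterated comultiplication `Δ⁽³⁾ = (Δ ⊗ id) ∘ Δ : B → (B ⊗ B) ⊗ B`. -/
def Delta3 : B →ₗ[K] (B ⊗[K] B) ⊗[K] B :=
  LinearMap.rTensor B (Coalgebra.comul : B →ₗ[K] B ⊗[K] B) ∘ₗ
    (Coalgebra.comul : B →ₗ[K] B ⊗[K] B)

/-- The coaction `π_L* : θ(x) = Σ x₍₃₎ · S⁻¹(x₍₁₎) ⊗ x₍₂₎` where `x = Π(b)` and
`Δ⁽³⁾(x) = Σ x₍₁₎ ⊗ x₍₂₎ ⊗ x₍₃₎`. -/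
def theta (i : A →ₐc[K] B) (p : B →ₐc[K] A) (S' : B →ₗ[K] B) : B →ₗ[K] B ⊗[K] B :=
  TensorProduct.map (LinearMap.mul' K B ∘ₗ LinearMap.lTensor B S') LinearMap.id ∘ₗ
  (TensorProduct.assoc K B B B).symm.toLinearMap ∘ₗ
  (TensorProduct.comm K (B ⊗[K] B) B).toLinearMap ∘ₗ
  Delta3 ∘ₗ PiMap i p

end SplitPair

/-!
The map `θ(x) = ∑ x₃ S⁻¹(x₁) ⊗ x₂` is the adjoint coaction of the co-opposite Hopf algebra
(whose antipode is `S⁻¹`) on `B`; in particular it is coassociative, up to exchanging the two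
`B`-factors. Since `Δ ≡ Δᵒᵖ` modulo `ℏ`, swapping the last two legs changes `θ(x)` by a multiple
of `ℏ` and turns it into `∑ x₂ S⁻¹(x₁) ⊗ x₃ = 1 ⊗ x`, which `id − ι∘ε` kills. Up to reordering
tensor factors, coassociativity rewrites `(d⁽ⁿ⁺¹⁾ ⊗ id) ∘ θ` as `d⁽ⁿ⁾ ⊗ ((id − ι∘ε) ⊗ id) ∘ θ`
applied to `θ`, so each further tensor factor contributes one more power of `ℏ`.
-/

open WithConv LinearMap

section Divisibility

variable {R M N P : Type*} [CommSemiring R] [AddCommMonoid M] [Module R M] [AddCommMonoid N]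
  [Module R N] [AddCommMonoid P] [Module R P]

theorem LinearMap.exists_lTensor_apply_eq_smul {c : R} {f : N →ₗ[R] P}
    (hf : ∀ n, ∃ y, f n = c • y) (t : M ⊗[R] N) : ∃ z, lTensor M f t = c • z := by
  induction t using TensorProduct.induction_on with
  | zero => exact ⟨0, by simp⟩
  | tmul m n =>
    obtain ⟨y, hy⟩ := hf n
    exact ⟨m ⊗ₜ y, by rw [lTensor_tmul, hy, TensorProduct.tmul_smul]⟩
  | add t t' ht ht' =>
    obtain ⟨z, hz⟩ := ht
    obtain ⟨z', hz'⟩ := ht'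
    exact ⟨z + z', by rw [map_add, hz, hz', smul_add]⟩

theorem LinearMap.exists_rTensor_apply_eq_smul {c : R} {f : N →ₗ[R] P}
    (hf : ∀ n, ∃ y, f n = c • y) (t : N ⊗[R] M) : ∃ z, rTensor M f t = c • z := by
  obtain ⟨z, hz⟩ := exists_lTensor_apply_eq_smul (M := M) hf (TensorProduct.comm R N M t)
  refine ⟨TensorProduct.comm R M P z, ?_⟩
  rw [← map_smul, ← hz, ← comm_comp_lTensor_comp_comm_eq]
  rfl

end Divisibility

section TwistMul

variable {K A A' T T' : Type*} [CommSemiring K] [Semiring A] [Algebra K A] [Semiring A']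
  [Algebra K A'] [AddCommMonoid T] [Module K T] [AddCommMonoid T'] [Module K T']

variable (T) in
def twistMul (s : A →ₗ[K] A) : (A ⊗[K] T) ⊗[K] A →ₗ[K] A ⊗[K] T :=
  map (mul' K A ∘ₗ lTensor A s) LinearMap.id ∘ₗ (TensorProduct.assoc K A A T).symm.toLinearMap ∘ₗ
    (TensorProduct.comm K (A ⊗[K] T) A).toLinearMap

@[simp]
theorem twistMul_tmul (s : A →ₗ[K] A) (a c : A) (t : T) :
    twistMul T s ((a ⊗ₜ t) ⊗ₜ c) = (c * s a) ⊗ₜ t := by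
  simp [twistMul]

theorem lTensor_comp_twistMul (s : A →ₗ[K] A) (F : T →ₗ[K] T') :
    lTensor A F ∘ₗ twistMul T s = twistMul T' s ∘ₗ rTensor A (lTensor A F) := by
  ext a t c
  simp

theorem rTensor_comp_twistMul (φ : A →ₐ[K] A') {s : A →ₗ[K] A} {s' : A' →ₗ[K] A'}
    (hφ : φ.toLinearMap ∘ₗ s = s' ∘ₗ φ.toLinearMap) :
    rTensor T φ.toLinearMap ∘ₗ twistMul T s =
      twistMul T s' ∘ₗ map (rTensor T φ.toLinearMap) φ.toLinearMap := by
  have hφa (a : A) : φ (s a) = s' (φ a) := LinearMap.congr_fun hφ a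
  ext a t c
  simp [hφa]

end TwistMul

section Antipode

variable {K B : Type*} [CommSemiring K] [Semiring B] [HopfAlgebra K B]

local notation "S" => (HopfAlgebra.antipode K : B →ₗ[K] B)
local notation "δ" => (Coalgebra.comul : B →ₗ[K] B ⊗[K] B)
local notation "ε" => (Coalgebra.counit : B →ₗ[K] K)
local notation "τ" => LinearEquiv.toLinearMap (TensorProduct.comm K B B)

theorem map_counit_comp_leftComm_comp_lTensor_comul {N : Type*} [AddCommMonoid N] [Module K N]
    (f : B ⊗[K] B →ₗ[K] N) :
    map (Algebra.linearMap K B ∘ₗ ε) f ∘ₗ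
      (TensorProduct.leftComm K B B B).toLinearMap ∘ₗ lTensor B δ ∘ₗ δ =
    TensorProduct.mk K B N 1 ∘ₗ f ∘ₗ δ := by
  have hcounit : (TensorProduct.lid K B).toLinearMap ∘ₗ rTensor B ε ∘ₗ δ = LinearMap.id := by
    ext; simp
  have hmove : map (Algebra.linearMap K B ∘ₗ ε) f ∘ₗ
      (TensorProduct.leftComm K B B B).toLinearMap =
      TensorProduct.mk K B N 1 ∘ₗ f ∘ₗ
        lTensor B ((TensorProduct.lid K B).toLinearMap ∘ₗ rTensor B ε) := by
    ext a b c
    simp [Algebra.algebraMap_eq_smul_one, TensorProduct.smul_tmul']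
    rw [TensorProduct.smul_tmul, ← map_smul, TensorProduct.smul_tmul']
  rw [← comp_assoc, hmove, comp_assoc, comp_assoc, ← comp_assoc _ (lTensor B δ), ← lTensor_comp,
    comp_assoc, hcounit, lTensor_id, id_comp]

/-- In Sweedler notation: `∑ S(x₂) x₃ ⊗ S(x₁) x₄ = ∑ ε(x₂) ⊗ S(x₁) x₃ = 1 ⊗ ∑ S(x₁) x₂`. -/
theorem LinearMap.comul_left_inv : toConv (τ ∘ₗ map S S ∘ₗ δ) * toConv δ = 1 := by
  set e := (TensorProduct.assoc K B B (B ⊗[K] B)).symm.toLinearMap ∘ₗ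
    lTensor B (TensorProduct.assoc K B B B).toLinearMap
  set Ψ := map (mul' K B ∘ₗ rTensor B S) (mul' K B ∘ₗ rTensor B S) ∘ₗ
    (TensorProduct.leftComm K B (B ⊗[K] B) B).toLinearMap
  have hcoassoc : map δ δ ∘ₗ δ = e ∘ₗ lTensor B (rTensor B δ) ∘ₗ lTensor B δ ∘ₗ δ := by
    simp only [e, coassoc_simps]
  have hΨ : mul' K (B ⊗[K] B) ∘ₗ map (τ ∘ₗ map S S) LinearMap.id ∘ₗ e = Ψ := by
    ext a b c d
    simp [e, Ψ, Algebra.TensorProduct.tmul_mul_tmul]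
  have hantipode : Ψ ∘ₗ lTensor B (rTensor B δ) =
      map (Algebra.linearMap K B ∘ₗ ε) (mul' K B ∘ₗ rTensor B S) ∘ₗ
        (TensorProduct.leftComm K B B B).toLinearMap := by
    rw [← HopfAlgebra.mul_antipode_rTensor_comul]
    ext a b d
    simp [Ψ]
  apply WithConv.ext
  calc mul' K (B ⊗[K] B) ∘ₗ map (τ ∘ₗ map S S ∘ₗ δ) δ ∘ₗ δ
      = (mul' K (B ⊗[K] B) ∘ₗ map (τ ∘ₗ map S S) LinearMap.id ∘ₗ e) ∘ₗ
          lTensor B (rTensor B δ) ∘ₗ lTensor B δ ∘ₗ δ := by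
        rw [comp_assoc, comp_assoc, ← hcoassoc, ← comp_assoc δ (map δ δ), ← map_comp, id_comp]
        rfl
    _ = map (Algebra.linearMap K B ∘ₗ ε) (mul' K B ∘ₗ rTensor B S) ∘ₗ
          (TensorProduct.leftComm K B B B).toLinearMap ∘ₗ lTensor B δ ∘ₗ δ := by
        rw [hΨ, ← comp_assoc, hantipode, comp_assoc]
    _ = TensorProduct.mk K B B 1 ∘ₗ mul' K B ∘ₗ rTensor B S ∘ₗ δ :=
        map_counit_comp_leftComm_comp_lTensor_comul _
    _ = (1 : WithConv (B →ₗ[K] B ⊗[K] B)).ofConv := by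
        rw [HopfAlgebra.mul_antipode_rTensor_comul]
        ext
        simp [Algebra.TensorProduct.one_def, Algebra.algebraMap_eq_smul_one]

theorem HopfAlgebra.comul_comp_antipode : δ ∘ₗ S = τ ∘ₗ map S S ∘ₗ δ :=
  congrArg ofConv (left_inv_eq_right_inv comul_left_inv comul_right_inv).symm

variable {S' : B →ₗ[K] B}

theorem HopfAlgebra.comul_comp_invAntipode (hS'₁ : S' ∘ₗ S = LinearMap.id)
    (hS'₂ : S ∘ₗ S' = LinearMap.id) :
    δ ∘ₗ S' = τ ∘ₗ map S' S' ∘ₗ δ := by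
  have hcancel : τ ∘ₗ map S' S' ∘ₗ τ ∘ₗ map S S = LinearMap.id := by
    have hS'S (b : B) : S' (S b) = b := LinearMap.congr_fun hS'₁ b
    ext a b
    simp [hS'S]
  calc δ ∘ₗ S'
      = (τ ∘ₗ map S' S' ∘ₗ τ ∘ₗ map S S) ∘ₗ δ ∘ₗ S' := by rw [hcancel, id_comp]
    _ = τ ∘ₗ map S' S' ∘ₗ (δ ∘ₗ S) ∘ₗ S' := by rw [comul_comp_antipode]; rfl
    _ = τ ∘ₗ map S' S' ∘ₗ δ := by rw [comp_assoc, hS'₂, comp_id]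

/-- In Sweedler notation `∑ x₂ S'(x₁) = ε(x)`: `S'` is the antipode of the co-opposite
Hopf algebra. -/
theorem HopfAlgebra.mul_comm_rTensor_invAntipode_comul (hS'₁ : S' ∘ₗ S = LinearMap.id)
    (hS'₂ : S ∘ₗ S' = LinearMap.id) :
    mul' K B ∘ₗ τ ∘ₗ rTensor B S' ∘ₗ δ = Algebra.linearMap K B ∘ₗ ε := by
  have hS'_one : S' 1 = 1 := by
    have h : S' (S 1) = 1 := LinearMap.congr_fun hS'₁ 1
    rwa [HopfAlgebra.antipode_one] at h
  calc mul' K B ∘ₗ τ ∘ₗ rTensor B S' ∘ₗ δ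
      = (S' ∘ₗ S) ∘ₗ mul' K B ∘ₗ τ ∘ₗ rTensor B S' ∘ₗ δ := by rw [hS'₁, id_comp]
    _ = S' ∘ₗ (mul' K B ∘ₗ map S S) ∘ₗ rTensor B S' ∘ₗ δ := by
        rw [← HopfAlgebra.antipode_comp_mul_comp_comm]; rfl
    _ = S' ∘ₗ mul' K B ∘ₗ lTensor B S ∘ₗ δ := by
        rw [comp_assoc, ← comp_assoc δ (rTensor B S'), map_comp_rTensor, hS'₂]
        rfl
    _ = Algebra.linearMap K B ∘ₗ ε := by
        rw [HopfAlgebra.mul_antipode_lTensor_comul]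
        ext
        simp [Algebra.algebraMap_eq_smul_one, hS'_one]

end Antipode

section AdjointCoaction

variable {K B : Type} [CommRing K] [Ring B] [HopfAlgebra K B] {S' : B →ₗ[K] B}

local notation "S" => (HopfAlgebra.antipode K : B →ₗ[K] B)
local notation "δ" => (Coalgebra.comul : B →ₗ[K] B ⊗[K] B)
local notation "τ" => LinearEquiv.toLinearMap (TensorProduct.comm K B B)

variable (S') in
/-- `x ↦ ∑ x₃ S'(x₁) ⊗ x₂`, so that `theta i p S' = adjointCoaction S' ∘ₗ PiMap i p`. -/
def adjointCoaction : B →ₗ[K] B ⊗[K] B := twistMul B S' ∘ₗ Delta3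

theorem twistMul_comp_rTensor_comm_comul (hS'₁ : S' ∘ₗ S = LinearMap.id)
    (hS'₂ : S ∘ₗ S' = LinearMap.id) :
    twistMul B S' ∘ₗ rTensor B (τ ∘ₗ δ) ∘ₗ δ = TensorProduct.mk K B B 1 := by
  have hpattern : twistMul B S' ∘ₗ rTensor B τ ∘ₗ (TensorProduct.assoc K B B B).symm.toLinearMap =
      τ ∘ₗ lTensor B (mul' K B ∘ₗ τ ∘ₗ rTensor B S') := by
    ext a b c
    simp
  calc twistMul B S' ∘ₗ rTensor B (τ ∘ₗ δ) ∘ₗ δ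
      = (twistMul B S' ∘ₗ rTensor B τ ∘ₗ (TensorProduct.assoc K B B B).symm.toLinearMap) ∘ₗ
          lTensor B δ ∘ₗ δ := by
        rw [rTensor_comp, comp_assoc, ← Coalgebra.coassoc_symm]
        rfl
    _ = τ ∘ₗ lTensor B (Algebra.linearMap K B ∘ₗ Coalgebra.counit) ∘ₗ δ := by
        rw [hpattern, comp_assoc, ← comp_assoc δ, ← lTensor_comp]
        simp only [comp_assoc]
        rw [HopfAlgebra.mul_comm_rTensor_invAntipode_comul hS'₁ hS'₂]
    _ = TensorProduct.mk K B B 1 := by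
        ext
        simp [lTensor_comp]

theorem adjointCoaction_eq_tmul_add_smul (hS'₁ : S' ∘ₗ S = LinearMap.id)
    (hS'₂ : S ∘ₗ S' = LinearMap.id) {c : K} (hΔ : ∀ z : B, ∃ y, δ z - τ (δ z) = c • y) (x : B) :
    ∃ y, adjointCoaction S' x = 1 ⊗ₜ x + c • y := by
  obtain ⟨z, hz⟩ := exists_rTensor_apply_eq_smul (M := B) (f := δ - τ ∘ₗ δ) hΔ (δ x)
  refine ⟨twistMul B S' z, ?_⟩
  have hsplit : rTensor B δ = rTensor B (τ ∘ₗ δ) + rTensor B (δ - τ ∘ₗ δ) := by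
    rw [← rTensor_add, add_sub_cancel]
  calc adjointCoaction S' x = twistMul B S' (rTensor B δ (δ x)) := rfl
    _ = twistMul B S' (rTensor B (τ ∘ₗ δ) (δ x)) + c • twistMul B S' z := by
        rw [hsplit, LinearMap.add_apply, map_add, hz, map_smul]
    _ = 1 ⊗ₜ x + c • twistMul B S' z := by
        congr 1
        exact congr($(twistMul_comp_rTensor_comm_comul hS'₁ hS'₂) x)

theorem pProj_one : pProj K B 1 = 0 := by
  simp [pProj, Bialgebra.counit_one]

theorem exists_rTensor_pProj_adjointCoaction_eq_smul (hS'₁ : S' ∘ₗ S = LinearMap.id)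
    (hS'₂ : S ∘ₗ S' = LinearMap.id) {c : K} (hΔ : ∀ z : B, ∃ y, δ z - τ (δ z) = c • y) (x : B) :
    ∃ y, rTensor B (pProj K B) (adjointCoaction S' x) = c • y := by
  obtain ⟨y, hy⟩ := adjointCoaction_eq_tmul_add_smul hS'₁ hS'₂ hΔ x
  refine ⟨rTensor B (pProj K B) y, ?_⟩
  rw [hy, map_add, map_smul, rTensor_tmul, pProj_one, TensorProduct.zero_tmul, zero_add]

/-- Both sides send `x` to `∑ (x₄ S'(x₂) ⊗ x₅ S'(x₁)) ⊗ x₃`; `e` identifies the two bracketings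
of the fivefold coproduct that arise. -/
theorem rTensor_comul_comp_adjointCoaction (hS'₁ : S' ∘ₗ S = LinearMap.id)
    (hS'₂ : S ∘ₗ S' = LinearMap.id) :
    rTensor B δ ∘ₗ adjointCoaction S' =
      (TensorProduct.assoc K B B B).symm.toLinearMap ∘ₗ
        (TensorProduct.leftComm K B B B).toLinearMap ∘ₗ
        lTensor B (adjointCoaction S') ∘ₗ adjointCoaction S' := by
  set e := rTensor (B ⊗[K] B) (TensorProduct.assoc K B B B).symm.toLinearMap ∘ₗ
    (TensorProduct.assoc K B (B ⊗[K] B) (B ⊗[K] B)).symm.toLinearMap ∘ₗ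
    lTensor B (TensorProduct.assoc K (B ⊗[K] B) B B).toLinearMap ∘ₗ
    (TensorProduct.assoc K B ((B ⊗[K] B) ⊗[K] B) B).toLinearMap
  have hcoassoc : map (rTensor B δ) δ ∘ₗ Delta3 = e ∘ₗ rTensor B (lTensor B Delta3) ∘ₗ Delta3 := by
    simp only [Delta3, e, coassoc_simps]
  have hpattern : twistMul B (τ ∘ₗ map S' S') ∘ₗ e =
      (TensorProduct.assoc K B B B).symm.toLinearMap ∘ₗ
        (TensorProduct.leftComm K B B B).toLinearMap ∘ₗ
        twistMul (B ⊗[K] B) S' ∘ₗ rTensor B (lTensor B (twistMul B S')) := by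
    ext
    simp [e, Algebra.TensorProduct.tmul_mul_tmul]
  calc rTensor B δ ∘ₗ twistMul B S' ∘ₗ Delta3
      = twistMul B (τ ∘ₗ map S' S') ∘ₗ map (rTensor B δ) δ ∘ₗ Delta3 := by
        rw [← comp_assoc, ← comp_assoc]
        congr 1
        exact rTensor_comp_twistMul (Bialgebra.comulAlgHom K B)
          (HopfAlgebra.comul_comp_invAntipode hS'₁ hS'₂)
    _ = (TensorProduct.assoc K B B B).symm.toLinearMap ∘ₗ
          (TensorProduct.leftComm K B B B).toLinearMap ∘ₗ
          twistMul (B ⊗[K] B) S' ∘ₗ rTensor B (lTensor B (twistMul B S')) ∘ₗ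
          rTensor B (lTensor B Delta3) ∘ₗ Delta3 := by
        rw [hcoassoc, ← comp_assoc, hpattern]
        simp only [comp_assoc]
    _ = (TensorProduct.assoc K B B B).symm.toLinearMap ∘ₗ
          (TensorProduct.leftComm K B B B).toLinearMap ∘ₗ
          lTensor B (twistMul B S' ∘ₗ Delta3) ∘ₗ twistMul B S' ∘ₗ Delta3 := by
        rw [← comp_assoc Delta3 (twistMul B S'), lTensor_comp_twistMul, lTensor_comp, rTensor_comp]
        simp only [comp_assoc]

end AdjointCoaction

section Admissibility

variable {K B : Type} [CommRing K] [Ring B] [HopfAlgebra K B] {M : Type*} [AddCommMonoid M]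
  [Module K M]

theorem dIter_zero : dIter K B 0 = pProj K B := comp_id _

theorem dIter_succ (n : ℕ) :
    dIter K B (n + 1) = map (pProj K B) (dIter K B n) ∘ₗ Coalgebra.comul := by
  show (map (pProj K B) (pProjIter K B n) ∘ₗ lTensor B (DeltaIter K B n)) ∘ₗ _ = _
  rw [map_comp_lTensor]
  rfl

theorem exists_rTensor_dIter_eq_pow_smul (θ : M →ₗ[K] B ⊗[K] M)
    (hθ : rTensor M Coalgebra.comul ∘ₗ θ = (TensorProduct.assoc K B B M).symm.toLinearMap ∘ₗ
      (TensorProduct.leftComm K B B M).toLinearMap ∘ₗ lTensor B θ ∘ₗ θ)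
    {c : K} (hc : ∀ m, ∃ y, rTensor M (pProj K B) (θ m) = c • y) (m : M) (n : ℕ) :
    ∃ y, rTensor M (dIter K B n) (θ m) = c ^ (n + 1) • y := by
  induction n with
  | zero =>
    obtain ⟨y, hy⟩ := hc m
    exact ⟨y, by rw [dIter_zero, zero_add, pow_one]; exact hy⟩
  | succ n ih =>
    set T := (Tn K B n).carrier
    obtain ⟨y, hy⟩ := ih
    obtain ⟨z, hz⟩ := exists_lTensor_apply_eq_smul (M := T) (f := rTensor M (pProj K B) ∘ₗ θ) hc y
    have hnat : rTensor M (map (pProj K B) (dIter K B n)) ∘ₗ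
        (TensorProduct.assoc K B B M).symm.toLinearMap ∘ₗ
          (TensorProduct.leftComm K B B M).toLinearMap =
        (TensorProduct.assoc K B T M).symm.toLinearMap ∘ₗ
          (TensorProduct.leftComm K T B M).toLinearMap ∘ₗ
          map (dIter K B n) (rTensor M (pProj K B)) := by
      ext; simp
    have hsucc : rTensor M (dIter K B (n + 1)) (θ m) =
        rTensor M (map (pProj K B) (dIter K B n)) (rTensor M Coalgebra.comul (θ m)) := by
      rw [dIter_succ]
      exact LinearMap.congr_fun (rTensor_comp M _ _) (θ m)
    refine ⟨(TensorProduct.assoc K B T M).symm (TensorProduct.leftComm K T B M z), hsucc.trans ?_⟩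
    calc rTensor M (map (pProj K B) (dIter K B n)) (rTensor M Coalgebra.comul (θ m))
        = (TensorProduct.assoc K B T M).symm (TensorProduct.leftComm K T B M
            (map (dIter K B n) (rTensor M (pProj K B)) (lTensor B θ (θ m)))) := by
          rw [← comp_apply (rTensor M Coalgebra.comul), hθ]
          exact congr($hnat _)
      _ = (TensorProduct.assoc K B T M).symm (TensorProduct.leftComm K T B M
            (lTensor T (rTensor M (pProj K B) ∘ₗ θ) (rTensor M (dIter K B n) (θ m)))) := by
          rw [← comp_apply (map _ _), map_comp_lTensor, ← lTensor_comp_rTensor]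
          rfl
      _ = c ^ (n + 1 + 1) •
            (TensorProduct.assoc K B T M).symm (TensorProduct.leftComm K T B M z) := by
          rw [hy, map_smul, hz]
          simp only [map_smul, smul_smul, pow_succ]

end Admissibility

theorem statement12_general {k : Type} [Field k]
    {A B : Type} [Ring A] [Ring B]
    [HopfAlgebra (PowerSeries k) A] [HopfAlgebra (PowerSeries k) B]
    (i : A →ₐc[PowerSeries k] B) (p : B →ₐc[PowerSeries k] A)
    (S' : B →ₗ[PowerSeries k] B)
    (hS'₁ : S' ∘ₗ (HopfAlgebra.antipode (PowerSeries k) : B →ₗ[PowerSeries k] B) = LinearMap.id)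
    (hS'₂ : (HopfAlgebra.antipode (PowerSeries k) : B →ₗ[PowerSeries k] B) ∘ₗ S' = LinearMap.id)
    (hΔ : ∀ x : B, ∃ y : B ⊗[PowerSeries k] B,
      Coalgebra.comul (R := PowerSeries k) x -
          (TensorProduct.comm (PowerSeries k) B B).toLinearMap
            (Coalgebra.comul (R := PowerSeries k) x) =
        (PowerSeries.X : PowerSeries k) • y) :
    -- `((id − ι∘ε) ⊗ id)(π_L*(x)) ∈ ℏ·(B ⊗ B)` for every `x ∈ L`
    (∀ x : B, PiMap i p x = x →
      ∃ y : B ⊗[PowerSeries k] B,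
        LinearMap.rTensor B (pProj (PowerSeries k) B) (theta i p S' x) =
          (PowerSeries.X : PowerSeries k) • y) ∧
    -- hence the coaction on `L` factors through `B′ ⊗ L`: `L` is admissible
    (∀ x : B, PiMap i p x = x →
      ∀ n : ℕ, ∃ y : (Tn (PowerSeries k) B n).carrier ⊗[PowerSeries k] B,
        LinearMap.rTensor B (dIter (PowerSeries k) B n) (theta i p S' x) =
          (PowerSeries.X : PowerSeries k) ^ (n + 1) • y) := by
  have htheta (x : B) (hx : PiMap i p x = x) : theta i p S' x = adjointCoaction S' x :=
    congrArg (adjointCoaction S') hx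
  have hfirst := exists_rTensor_pProj_adjointCoaction_eq_smul hS'₁ hS'₂ hΔ
  refine ⟨fun x hx => htheta x hx ▸ hfirst x, fun x hx n => htheta x hx ▸ ?_⟩
  exact exists_rTensor_dIter_eq_pow_smul _ (rTensor_comul_comp_adjointCoaction hS'₁ hS'₂) hfirst x n

/-- Let `K = k[[ℏ]]` and `(A, B, i, p)` a split pair of Hopf algebras over
`K` with invertible antipode such that the image of `Δ − (1 2)∘Δ` is contained in `ℏ·(B ⊗ B)`.
Then for every `x ∈ L = Π(B)`, `((id − ι∘ε) ⊗ id)(π_L*(x)) ∈ ℏ·(B ⊗ B)`; hence, by the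
admissibility criterion, the coaction on `L` factors through `B′ ⊗ L`, i.e. `L` is an
admissible Drinfeld–Yetter `B`-module. -/
theorem statement12 {k : Type} [Field k] [CharZero k]
    {A B : Type} [Ring A] [Ring B]
    [HopfAlgebra (PowerSeries k) A] [HopfAlgebra (PowerSeries k) B]
    (i : A →ₐc[PowerSeries k] B) (p : B →ₐc[PowerSeries k] A)
    (hsplit : ∀ a : A, p (i a) = a)
    (S' : B →ₗ[PowerSeries k] B)
    (hS'₁ : S' ∘ₗ (HopfAlgebra.antipode (PowerSeries k) : B →ₗ[PowerSeries k] B) = LinearMap.id)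
    (hS'₂ : (HopfAlgebra.antipode (PowerSeries k) : B →ₗ[PowerSeries k] B) ∘ₗ S' = LinearMap.id)
    (hΔ : ∀ x : B, ∃ y : B ⊗[PowerSeries k] B,
      Coalgebra.comul (R := PowerSeries k) x -
          (TensorProduct.comm (PowerSeries k) B B).toLinearMap
            (Coalgebra.comul (R := PowerSeries k) x) =
        (PowerSeries.X : PowerSeries k) • y) :
    -- `((id − ι∘ε) ⊗ id)(π_L*(x)) ∈ ℏ·(B ⊗ B)` for every `x ∈ L`
    (∀ x : B, PiMap i p x = x →
      ∃ y : B ⊗[PowerSeries k] B,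
        LinearMap.rTensor B (pProj (PowerSeries k) B) (theta i p S' x) =
          (PowerSeries.X : PowerSeries k) • y) ∧
    -- hence the coaction on `L` factors through `B′ ⊗ L`: `L` is admissible
    (∀ x : B, PiMap i p x = x →
      ∀ n : ℕ, ∃ y : (Tn (PowerSeries k) B n).carrier ⊗[PowerSeries k] B,
        LinearMap.rTensor B (dIter (PowerSeries k) B n) (theta i p S' x) =
          (PowerSeries.X : PowerSeries k) ^ (n + 1) • y) :=
  statement12_general i p S' hS'₁ hS'₂ hΔ
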